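/- For an integer k > 1, the function G(r) = ((1 − r^{k+1})/(1 − r))^2 · (1/(1+r))^{2k} is monotonically non-increasing on the interval [(2k−1)/(2k+1), 1). -/

import Mathlib

/-!
Write `G = g²` with `g r = (1 + r + ⋯ + r^k) / (1 + r)^k = (1 - r^(k+1)) / ((1 - r) (1 + r)^k)`.
Since `g ≥ 0`, it suffices that `g` is antitone on `[0, 1)`, which contains `[(2k-1)/(2k+1), 1)`.
By the quotient rule `g'` has the sign of `k (r^k + 1)(r - 1) - (r + 1)(r^k - 1)`, which is `≤ 0`
on `[0, 1]` by induction on `k`: the step from `k` to `k + 1` adds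
`(1 - r)(1 - (k+1) r^k + k r^(k+1))` to the gap, and `1 - (k+1) r^k + k r^(k+1) ≥ 0` for `r ≥ 0`,
again by induction, since its step adds `(k+1) r^k (1 - r)²`.
-/

open Set

theorem succ_mul_pow_sub_mul_pow_succ_le_one {r : ℝ} (hr : 0 ≤ r) (k : ℕ) :
    (k + 1) * r ^ k - k * r ^ (k + 1) ≤ 1 := by
  induction k with
  | zero => simp
  | succ k ih =>
    have step : ((k + 1 : ℕ) + 1) * r ^ (k + 1) - (k + 1 : ℕ) * r ^ (k + 1 + 1)
        = (k + 1) * r ^ k - k * r ^ (k + 1) - (k + 1) * r ^ k * (1 - r) ^ 2 := by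
      push_cast; ring
    have : 0 ≤ (k + 1) * r ^ k * (1 - r) ^ 2 := by positivity
    linarith

theorem mul_pow_add_one_mul_sub_one_le {r : ℝ} (hr₀ : 0 ≤ r) (hr₁ : r ≤ 1) (k : ℕ) :
    k * (r ^ k + 1) * (r - 1) ≤ (r + 1) * (r ^ k - 1) := by
  induction k with
  | zero => simp
  | succ k ih =>
    have step : (r + 1) * (r ^ (k + 1) - 1) - (k + 1 : ℕ) * (r ^ (k + 1) + 1) * (r - 1)
        = (r + 1) * (r ^ k - 1) - k * (r ^ k + 1) * (r - 1)
          + (1 - r) * (1 - ((k + 1) * r ^ k - k * r ^ (k + 1))) := by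
      push_cast; ring
    have : 0 ≤ (1 - r) * (1 - ((k + 1) * r ^ k - k * r ^ (k + 1))) :=
      mul_nonneg (by linarith) (by linarith [succ_mul_pow_sub_mul_pow_succ_le_one hr₀ k])
    linarith

noncomputable def geomSumRatio (k : ℕ) (r : ℝ) : ℝ :=
  (1 - r ^ (k + 1)) / (1 - r) / (1 + r) ^ k

theorem hasDerivAt_geomSumRatio (k : ℕ) {r : ℝ} (hr₁ : r ≠ 1) (hr₂ : 1 + r ≠ 0) :
    HasDerivAt (geomSumRatio k)
      ((k * (r ^ k + 1) * (r - 1) - (r + 1) * (r ^ k - 1)) /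
        ((1 - r) ^ 2 * (1 + r) ^ (k + 1))) r := by
  have h1 : 1 - r ≠ 0 := sub_ne_zero.2 hr₁.symm
  have hnum := (hasDerivAt_pow (k + 1) r).const_sub 1
  have hden := ((hasDerivAt_id' r).const_add 1).pow k
  refine ((hnum.div ((hasDerivAt_id' r).const_sub 1) h1).div hden
    (pow_ne_zero k hr₂)).congr_deriv ?_
  rcases k with _ | k
  · field_simp; ring
  · simp only [Pi.div_apply, Pi.pow_apply, Nat.cast_add, Nat.cast_one, add_tsub_cancel_right]
    field_simp
    ring

theorem geomSumRatio_nonneg (k : ℕ) {r : ℝ} (hr : r ∈ Ico (0 : ℝ) 1) :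
    0 ≤ geomSumRatio k r := by
  obtain ⟨hr₀, hr₁⟩ := hr
  have : r ^ (k + 1) ≤ 1 := pow_le_one₀ hr₀ hr₁.le
  exact div_nonneg (div_nonneg (by linarith) (by linarith)) (by positivity)

theorem antitoneOn_geomSumRatio (k : ℕ) : AntitoneOn (geomSumRatio k) (Ico 0 1) := by
  have hderiv : ∀ r ∈ Ico (0 : ℝ) 1, HasDerivAt (geomSumRatio k)
      ((k * (r ^ k + 1) * (r - 1) - (r + 1) * (r ^ k - 1)) /
        ((1 - r) ^ 2 * (1 + r) ^ (k + 1))) r :=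
    fun r hr => hasDerivAt_geomSumRatio k hr.2.ne (by linarith [hr.1])
  refine antitoneOn_of_hasDerivWithinAt_nonpos (convex_Ico 0 1)
    (fun r hr => (hderiv r hr).continuousAt.continuousWithinAt)
    (fun r hr => (hderiv r (interior_subset hr)).hasDerivWithinAt) fun r hr => ?_
  obtain ⟨hr₀, hr₁⟩ := interior_subset hr
  exact div_nonpos_of_nonpos_of_nonneg
    (sub_nonpos.2 (mul_pow_add_one_mul_sub_one_le hr₀ hr₁.le k)) (by positivity)

theorem antitoneOn_sq_geomSumRatio (k : ℕ) :
    AntitoneOn (fun r => geomSumRatio k r ^ 2) (Ico 0 1) :=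
  fun _ hr _ hs hrs =>
    pow_le_pow_left₀ (geomSumRatio_nonneg k hs) (antitoneOn_geomSumRatio k hr hs hrs) 2

/-- For an integer `k > 1`, the function
`G(r) = ((1 − r^(k+1))/(1 − r))^2 · (1/(1+r))^(2k)` is monotonically non-increasing
on `[(2k−1)/(2k+1), 1)`. -/
theorem stmt_10 (k : ℕ) (hk : 1 < k) :
    AntitoneOn
      (fun r : ℝ => ((1 - r ^ (k + 1)) / (1 - r)) ^ 2 * (1 / (1 + r)) ^ (2 * k))
      (Set.Ico ((2 * (k:ℝ) - 1) / (2 * (k:ℝ) + 1)) 1) := by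
  have hG : (fun r : ℝ => ((1 - r ^ (k + 1)) / (1 - r)) ^ 2 * (1 / (1 + r)) ^ (2 * k))
      = fun r => geomSumRatio k r ^ 2 := by
    funext r
    rw [geomSumRatio]
    ring
  have hk' : (1 : ℝ) ≤ k := by exact_mod_cast hk.le
  have hsub : Ico ((2 * (k:ℝ) - 1) / (2 * (k:ℝ) + 1)) 1 ⊆ Ico 0 1 :=
    Ico_subset_Ico_left (div_nonneg (by linarith) (by linarith))
  rw [hG]
  exact (antitoneOn_sq_geomSumRatio k).mono hsub
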